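/- The two-variable logarithmic Mahler measures satisfy m(1 + y² − x·y) = m(1 + y² + x·y) = m(1 + x + y). -/

import Mathlib

/-!
Both sides are integrals over the torus `(ℝ/ℤ)²`, whose Haar measure is preserved by the
translation `(a, b) ↦ (a + 1/2, b)` and by the surjective endomorphism `(a, b) ↦ (a + b, 2b)`.
Along the first, `1 + y² - xy` pulls back to `1 + y² + xy`; along the second, so does `1 + x + y`.
Identifying the iterated integrals with integrals over the torus needs Fubini, hence the
integrability of `log |1 + y² + xy|`: as `|y| = 1`, `|1 + y² + xy| = |y + ȳ + x| ≥ |Im x|`, so it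
is dominated by `log 3 - log |sin 2πa|`.
-/

noncomputable def logMahler2 (p : ℂ → ℂ → ℂ) : ℝ :=
  ∫ u in (0:ℝ)..1, ∫ v in (0:ℝ)..1,
    Real.log (‖(p (Complex.exp (2 * Real.pi * Complex.I * u))
      (Complex.exp (2 * Real.pi * Complex.I * v)))‖)

open MeasureTheory Real

lemma ae_sin_two_pi_mul_ne_zero : ∀ᵐ u : ℝ, sin (2 * π * u) ≠ 0 := by
  refine measure_mono_null (fun u hu => ?_)
    ((Set.countable_range fun n : ℤ => (n / 2 : ℝ)).measure_zero volume)
  obtain ⟨n, hn⟩ := sin_eq_zero_iff.1 (not_not.1 hu)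
  exact ⟨n, by field_simp at hn ⊢; nlinarith [pi_pos]⟩

namespace UnitAddCircle

lemma toCircle_coe (u : ℝ) :
    (AddCircle.toCircle (u : UnitAddCircle) : ℂ) = Complex.exp (2 * π * Complex.I * u) := by
  rw [AddCircle.toCircle_apply_mk, Circle.coe_exp]
  push_cast
  ring_nf

lemma im_toCircle_coe (u : ℝ) :
    (AddCircle.toCircle (u : UnitAddCircle) : ℂ).im = sin (2 * π * u) := by
  rw [AddCircle.toCircle_apply_mk, Circle.coe_exp, Complex.exp_ofReal_mul_I_im, div_one]

lemma toCircle_coe_half : (AddCircle.toCircle ((1 / 2 : ℝ) : UnitAddCircle) : ℂ) = -1 := by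
  rw [toCircle_coe, ← Complex.exp_pi_mul_I]
  push_cast
  ring_nf

lemma intervalIntegral_intervalIntegral_eq_integral {E : Type*} [NormedAddCommGroup E]
    [NormedSpace ℝ E] {f : UnitAddCircle × UnitAddCircle → E} (hf : Integrable f) :
    ∫ u in (0 : ℝ)..1, ∫ v in (0 : ℝ)..1, f (u, v) = ∫ z, f z := by
  have h (g : UnitAddCircle → E) : ∫ u in (0 : ℝ)..1, g u = ∫ a, g a := by
    simpa using UnitAddCircle.intervalIntegral_preimage 0 g
  calc ∫ u in (0 : ℝ)..1, ∫ v in (0 : ℝ)..1, f (u, v)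
      = ∫ u in (0 : ℝ)..1, ∫ b, f (u, b) :=
        intervalIntegral.integral_congr fun u _ => h fun b => f (u, b)
    _ = ∫ a, ∫ b, f (a, b) := h fun a => ∫ b, f (a, b)
    _ = ∫ z, f z := (integral_prod f hf).symm

lemma ae_im_toCircle_ne_zero :
    ∀ᵐ a : UnitAddCircle, (AddCircle.toCircle a : ℂ).im ≠ 0 := by
  have him : Measurable fun a : UnitAddCircle => (AddCircle.toCircle a : ℂ).im := by fun_prop
  rw [← (UnitAddCircle.measurePreserving_mk 0).map_eq,
    ae_map_iff (p := fun a : UnitAddCircle => (AddCircle.toCircle a : ℂ).im ≠ 0) (by fun_prop)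
      ((measurableSet_singleton 0).compl.preimage him)]
  refine ae_restrict_of_ae ?_
  simpa only [im_toCircle_coe] using ae_sin_two_pi_mul_ne_zero

lemma integrable_log_abs_im_toCircle :
    Integrable fun a : UnitAddCircle => log |(AddCircle.toCircle a : ℂ).im| := by
  have hm : Measurable fun a : UnitAddCircle => log |(AddCircle.toCircle a : ℂ).im| :=
    (by fun_prop : Continuous fun a : UnitAddCircle =>
      |(AddCircle.toCircle a : ℂ).im|).measurable.log
  rw [← (UnitAddCircle.measurePreserving_mk 0).integrable_comp hm.aestronglyMeasurable, zero_add,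
    ← IntegrableOn, ← intervalIntegrable_iff_integrableOn_Ioc_of_le zero_le_one]
  have h := intervalIntegrable_log_sin.comp_mul_left (a := 0) (b := 2 * π) (c := 2 * π)
  rw [zero_div, div_self (by positivity)] at h
  simpa [Function.comp_def, im_toCircle_coe] using h

end UnitAddCircle

lemma AddCircle.measurePreserving_add_nsmul_snd {T : ℝ} [Fact (0 < T)] {n : ℕ} (hn : n ≠ 0) :
    MeasurePreserving (fun z : AddCircle T × AddCircle T => (z.1 + z.2, n • z.2))
      (volume.prod volume) (volume.prod volume) := by
  let f : AddCircle T × AddCircle T →+ AddCircle T × AddCircle T :=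
    AddMonoidHom.prod (AddMonoidHom.fst _ _ + AddMonoidHom.snd _ _) (n • AddMonoidHom.snd _ _)
  have hf : Continuous fun z : AddCircle T × AddCircle T => (z.1 + z.2, n • z.2) := by fun_prop
  refine AddMonoidHom.measurePreserving (f := f) hf ?_ rfl
  rintro ⟨c, d⟩
  obtain ⟨t, rfl⟩ := QuotientAddGroup.mk_surjective d
  refine ⟨(c - (t / n : ℝ), (t / n : ℝ)), Prod.ext (sub_add_cancel _ _) ?_⟩
  change n • ((t / n : ℝ) : AddCircle T) = t
  rw [← AddCircle.coe_nsmul, nsmul_eq_mul, mul_div_cancel₀ _ (Nat.cast_ne_zero.2 hn)]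

noncomputable def torusLogNorm (p : ℂ → ℂ → ℂ) (z : UnitAddCircle × UnitAddCircle) : ℝ :=
  log ‖p z.1.toCircle z.2.toCircle‖

lemma measurable_torusLogNorm {p : ℂ → ℂ → ℂ} (hp : Continuous fun z : ℂ × ℂ => p z.1 z.2) :
    Measurable (torusLogNorm p) :=
  (hp.comp (by fun_prop : Continuous fun z : UnitAddCircle × UnitAddCircle =>
    ((z.1.toCircle : ℂ), (z.2.toCircle : ℂ)))).norm.measurable.log

lemma logMahler2_eq_integral_torusLogNorm {p : ℂ → ℂ → ℂ} (hp : Integrable (torusLogNorm p)) :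
    logMahler2 p = ∫ z, torusLogNorm p z := by
  rw [← UnitAddCircle.intervalIntegral_intervalIntegral_eq_integral hp]
  simp only [torusLogNorm, UnitAddCircle.toCircle_coe]
  rfl

lemma logMahler2_eq_of_measurePreserving {p q : ℂ → ℂ → ℂ}
    {φ : UnitAddCircle × UnitAddCircle → UnitAddCircle × UnitAddCircle}
    (hφ : MeasurePreserving φ) (hq : Measurable (torusLogNorm q))
    (hpq : torusLogNorm q ∘ φ = torusLogNorm p) (hp : Integrable (torusLogNorm p)) :
    logMahler2 p = logMahler2 q := by
  have hq' : Integrable (torusLogNorm q) := by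
    rwa [← hφ.integrable_comp hq.aestronglyMeasurable, hpq]
  have hqm : AEStronglyMeasurable (torusLogNorm q) (volume.map φ) := by
    rw [hφ.map_eq]
    exact hq.aestronglyMeasurable
  calc logMahler2 p = ∫ z, torusLogNorm q (φ z) := by
        rw [logMahler2_eq_integral_torusLogNorm hp, ← hpq]
        rfl
    _ = ∫ z, torusLogNorm q z ∂(volume.map φ) := (integral_map hφ.aemeasurable hqm).symm
    _ = logMahler2 q := by rw [hφ.map_eq, logMahler2_eq_integral_torusLogNorm hq']

lemma abs_im_le_norm_one_add_sq_add_mul {x y : ℂ} (hy : ‖y‖ = 1) :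
    |x.im| ≤ ‖1 + y ^ 2 + x * y‖ := by
  have hconj : y * (starRingEnd ℂ) y = 1 := by
    rw [Complex.mul_conj, Complex.normSq_eq_norm_sq, hy]; norm_num
  have h : 1 + y ^ 2 + x * y = y * ((starRingEnd ℂ) y + y + x) := by
    linear_combination -hconj
  rw [h, norm_mul, hy, one_mul]
  refine le_of_eq_of_le ?_ (Complex.abs_im_le_norm _)
  simp

lemma norm_one_add_sq_add_mul_le {x y : ℂ} (hx : ‖x‖ = 1) (hy : ‖y‖ = 1) :
    ‖1 + y ^ 2 + x * y‖ ≤ 3 := by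
  calc ‖1 + y ^ 2 + x * y‖ ≤ ‖(1 : ℂ)‖ + ‖y ^ 2‖ + ‖x * y‖ := norm_add₃_le
    _ = 3 := by rw [norm_pow, norm_mul, hx, hy]; norm_num

lemma abs_log_le_log_sub_log {r s C : ℝ} (hs : 0 < s) (hs1 : s ≤ 1) (hC : 1 ≤ C)
    (hsr : s ≤ r) (hrC : r ≤ C) : |log r| ≤ log C - log s := by
  have h1 := log_le_log hs hsr
  have h2 := log_le_log (hs.trans_le hsr) hrC
  have h3 := log_nonpos hs.le hs1
  have h4 := log_nonneg hC
  rw [abs_le]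
  constructor <;> linarith

lemma integrable_torusLogNorm_one_add_sq_add_mul :
    Integrable (torusLogNorm fun x y => 1 + y ^ 2 + x * y) := by
  refine Integrable.mono' (g := fun z => log 3 - log |(z.1.toCircle : ℂ).im|)
    ((integrable_const _).sub (UnitAddCircle.integrable_log_abs_im_toCircle.comp_fst volume))
    (measurable_torusLogNorm (by fun_prop)).aestronglyMeasurable ?_
  filter_upwards [Measure.quasiMeasurePreserving_fst.ae UnitAddCircle.ae_im_toCircle_ne_zero]
    with z hz
  exact abs_log_le_log_sub_log (abs_pos.2 hz)
    ((Complex.abs_im_le_norm _).trans_eq (Circle.norm_coe _)) (by norm_num)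
    (abs_im_le_norm_one_add_sq_add_mul (Circle.norm_coe _))
    (norm_one_add_sq_add_mul_le (Circle.norm_coe _) (Circle.norm_coe _))

theorem stmt19 :
    logMahler2 (fun x y => 1 + y ^ 2 - x * y) = logMahler2 (fun x y => 1 + y ^ 2 + x * y) ∧
    logMahler2 (fun x y => 1 + y ^ 2 + x * y) = logMahler2 (fun x y => 1 + x + y) := by
  have hp := integrable_torusLogNorm_one_add_sq_add_mul
  constructor
  · refine (logMahler2_eq_of_measurePreserving
      (measurePreserving_add_right (volume.prod volume) (((1 / 2 : ℝ) : UnitAddCircle), 0))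
      (measurable_torusLogNorm (by fun_prop)) ?_ hp).symm
    ext z
    simp only [torusLogNorm, Function.comp_apply, Prod.fst_add, Prod.snd_add, add_zero,
      AddCircle.toCircle_add, Circle.coe_mul, UnitAddCircle.toCircle_coe_half]
    ring_nf
  · refine logMahler2_eq_of_measurePreserving
      (AddCircle.measurePreserving_add_nsmul_snd two_ne_zero)
      (measurable_torusLogNorm (by fun_prop)) ?_ hp
    ext z
    simp only [torusLogNorm, Function.comp_apply, AddCircle.toCircle_add, AddCircle.toCircle_nsmul,
      Circle.coe_mul, Circle.coe_pow]
    ring_nf
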